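/- Under the assumptions above, for every w ∈ ℝ⁴: if α ≥ 1 then F(αw) ≥ α^{p+2} F(w), and if 0 < α ≤ 1 then F(αw) ≤ α^{p+2} F(w). -/

import Mathlib

/-!
Everything happens along a ray: for fixed `w` put `f t = F (t • w)`, so that `t f'(t) = G (t • w)`
and condition (a) reads `t g'(t) ≥ (p + 2) g(t)` for `g t = t f'(t)`.
The function `h = g - (p + 2) f` vanishes at `0` and satisfies `t h'(t) ≥ 0`, hence `h ≥ 0` on
`[0, ∞)`; that is, `t f'(t) ≥ (p + 2) f(t)`, which makes `t ^ (-(p + 2)) * f t` nondecreasing on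
`(0, ∞)`. Comparing its values at `1` and `α` gives both inequalities.
-/

open RealInnerProductSpace InnerProductSpace Set

section InnerProductSpace

variable {E : Type*} [NormedAddCommGroup E] [InnerProductSpace ℝ E] [CompleteSpace E]

theorem HasGradientAt.hasDerivAt_comp_smul {f : E → ℝ} {f' w : E} {t : ℝ}
    (hf : HasGradientAt f f' (t • w)) : HasDerivAt (fun s : ℝ => f (s • w)) ⟪w, f'⟫ t := by
  have hline : HasDerivAt (fun s : ℝ => s • w) w t := by
    simpa using (hasDerivAt_id t).smul_const w
  simpa [Function.comp_def, real_inner_comm] using hf.hasFDerivAt.comp_hasDerivAt t hline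

theorem ContDiff.differentiable_gradient {f : E → ℝ} (hf : ContDiff ℝ 2 f) :
    Differentiable ℝ (gradient f) :=
  (toDual ℝ E).symm.toContinuousLinearEquiv.differentiable.comp
    ((hf.fderiv_right (m := 1) (by norm_num)).differentiable one_ne_zero)

end InnerProductSpace

section Ray

variable {f f' : ℝ → ℝ} {q : ℝ}

theorem mul_le_mul_deriv_of_euler_mul_deriv {g' : ℝ → ℝ} (hf : ∀ t, HasDerivAt f (f' t) t)
    (hg : ∀ t, HasDerivAt (fun t => t * f' t) (g' t) t) (hf0 : f 0 = 0)
    (hEuler : ∀ t > 0, q * (t * f' t) ≤ t * g' t) {t : ℝ} (ht : 0 ≤ t) :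
    q * f t ≤ t * f' t := by
  set h : ℝ → ℝ := fun t => t * f' t - q * f t
  have hh : ∀ t, HasDerivAt h (g' t - q * f' t) t := fun t => (hg t).sub ((hf t).const_mul q)
  have hmono : MonotoneOn h (Ici 0) := by
    refine monotoneOn_of_hasDerivWithinAt_nonneg (convex_Ici 0)
      (fun t _ => (hh t).continuousAt.continuousWithinAt) (fun t _ => (hh t).hasDerivWithinAt) ?_
    intro s hs
    rw [interior_Ici] at hs
    have := hEuler s hs
    exact nonneg_of_mul_nonneg_right (by linarith) hs
  have := hmono self_mem_Ici ht ht
  simp only [h, hf0, zero_mul, mul_zero, sub_zero] at this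
  linarith

theorem monotoneOn_rpow_neg_mul (hf : ∀ t > 0, HasDerivAt f (f' t) t)
    (hq : ∀ t > 0, q * f t ≤ t * f' t) : MonotoneOn (fun t => t ^ (-q) * f t) (Ioi 0) := by
  have hderiv : ∀ t > 0, HasDerivAt (fun t => t ^ (-q) * f t)
      (t ^ (-q - 1) * (t * f' t - q * f t)) t := by
    intro t ht
    refine ((Real.hasDerivAt_rpow_const (Or.inl ht.ne')).mul (hf t ht)).congr_deriv ?_
    rw [Real.rpow_sub_one ht.ne']
    field_simp
    ring
  refine monotoneOn_of_hasDerivWithinAt_nonneg (f' := fun t => t ^ (-q - 1) * (t * f' t - q * f t))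
    (convex_Ioi 0) (fun t ht => (hderiv t ht).continuousAt.continuousWithinAt) ?_ ?_
  all_goals intro t ht; rw [interior_Ioi] at ht
  · exact (hderiv t ht).hasDerivWithinAt
  · exact mul_nonneg (Real.rpow_nonneg ht.le _) (by linarith [hq t ht])

theorem rpow_mul_le_of_one_le (hf : ∀ t > 0, HasDerivAt f (f' t) t)
    (hq : ∀ t > 0, q * f t ≤ t * f' t) {α : ℝ} (hα : 1 ≤ α) : α ^ q * f 1 ≤ f α := by
  have hα0 : 0 < α := one_pos.trans_le hα
  have := monotoneOn_rpow_neg_mul hf hq (mem_Ioi.2 one_pos) (mem_Ioi.2 hα0) hα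
  simp only [Real.one_rpow, one_mul, Real.rpow_neg hα0.le] at this
  exact (le_inv_mul_iff₀ (Real.rpow_pos_of_pos hα0 q)).1 this

theorem le_rpow_mul_of_le_one (hf : ∀ t > 0, HasDerivAt f (f' t) t)
    (hq : ∀ t > 0, q * f t ≤ t * f' t) {α : ℝ} (hα0 : 0 < α) (hα : α ≤ 1) :
    f α ≤ α ^ q * f 1 := by
  have := monotoneOn_rpow_neg_mul hf hq (mem_Ioi.2 hα0) (mem_Ioi.2 one_pos) hα
  simp only [Real.one_rpow, one_mul, Real.rpow_neg hα0.le] at this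
  exact (inv_mul_le_iff₀ (Real.rpow_pos_of_pos hα0 q)).1 this

end Ray

theorem stmt_2_general (p : ℝ)
    (F : EuclideanSpace ℝ (Fin 4) → ℝ)
    (hF : ContDiff ℝ 2 F) (hF0 : F 0 = 0)
    (G : EuclideanSpace ℝ (Fin 4) → ℝ)
    (hG : ∀ w, G w = ⟪w, gradient F w⟫)
    (ha : ∀ w, ⟪w, gradient G w⟫ ≥ (p + 2) * G w) :
    ∀ (w : EuclideanSpace ℝ (Fin 4)) (α : ℝ),
      (1 ≤ α → F (α • w) ≥ α ^ (p + 2) * F w) ∧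
      (0 < α → α ≤ 1 → F (α • w) ≤ α ^ (p + 2) * F w) := by
  intro w α
  have hG_ray : ∀ t : ℝ, t * ⟪w, gradient F (t • w)⟫ = G (t • w) := fun t => by
    rw [hG, real_inner_smul_left]
  have hGd : Differentiable ℝ G := by
    rw [funext hG]
    exact differentiable_id.inner ℝ hF.differentiable_gradient
  have hf : ∀ t : ℝ, HasDerivAt (fun s : ℝ => F (s • w)) ⟪w, gradient F (t • w)⟫ t := fun t =>
    ((hF.differentiable (by norm_num)) _).hasGradientAt.hasDerivAt_comp_smul
  have hg : ∀ t : ℝ, HasDerivAt (fun s : ℝ => s * ⟪w, gradient F (s • w)⟫)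
      ⟪w, gradient G (t • w)⟫ t := fun t => by
    simpa only [hG_ray] using (hGd _).hasGradientAt.hasDerivAt_comp_smul
  have hEuler : ∀ t > 0, (p + 2) * (t * ⟪w, gradient F (t • w)⟫) ≤ t * ⟪w, gradient G (t • w)⟫ :=
    fun t _ => by simpa only [hG_ray, ← real_inner_smul_left] using ha (t • w)
  have hq : ∀ t > 0, (p + 2) * F (t • w) ≤ t * ⟪w, gradient F (t • w)⟫ := fun t ht =>
    mul_le_mul_deriv_of_euler_mul_deriv hf hg (by simp [hF0]) hEuler ht.le
  refine ⟨fun hα => ?_, fun hα0 hα => ?_⟩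
  · simpa using rpow_mul_le_of_one_le (fun t _ => hf t) hq hα
  · simpa using le_rpow_mul_of_le_one (fun t _ => hf t) hq hα0 hα

/-- Lemma (Esfahani–Levandosky type), item (ii) for `F`: under condition (a),
`F(αw) ≥ α^(p+2) F(w)` for `α ≥ 1` and `F(αw) ≤ α^(p+2) F(w)` for `0 < α ≤ 1`. -/
theorem stmt_2 (p : ℝ) (hp : 0 < p)
    (F : EuclideanSpace ℝ (Fin 4) → ℝ)
    (hF : ContDiff ℝ 2 F) (hF0 : F 0 = 0)
    (G : EuclideanSpace ℝ (Fin 4) → ℝ)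
    (hG : ∀ w, G w = ⟪w, gradient F w⟫)
    (ha : ∀ w, ⟪w, gradient G w⟫ ≥ (p + 2) * G w) :
    ∀ (w : EuclideanSpace ℝ (Fin 4)) (α : ℝ),
      (1 ≤ α → F (α • w) ≥ α ^ (p + 2) * F w) ∧
      (0 < α → α ≤ 1 → F (α • w) ≤ α ^ (p + 2) * F w) :=
  stmt_2_general p F hF hF0 G hG ha
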